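/- arXiv:0708.3111 — 4 statements merged into one kernel-verified Lean document; each statement's English description precedes it below -/
import Mathlib

section
/- If C is a complete admissible clutter, then C is unmixed, i.e., all minimal vertex covers of C have the same cardinality. -/
/-!
Every minimal vertex cover `C` meets each matching edge `em i` in exactly one vertex, hence
has `g` elements. Suppose `C` met `em i` in vertices `x`, `y` of colour classes `a < b`.
Minimality gives edges `fx`, `fy` with `fx ∩ C = {x}` and `fy ∩ C = {y}`, and both are
maximal admissible sets. Since `fx` is maximal it extends beyond colour `a + 1`, as `em i`
does. The part of `fy` below colour `a + 1` followed by the part of `fx` from `a + 1` on is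
then again a maximal admissible set, and it avoids `C`. But a maximal admissible set is
either an edge or contains some `em j`, so it meets every vertex cover.
-/

variable {V : Type} [Fintype V] [DecidableEq V]

/-- A clutter: a family of finsets (edges), none of which contains another. -/
def IsClutter (E : Set (Finset V)) : Prop :=
  ∀ e ∈ E, ∀ f ∈ E, e ⊆ f → e = f

/-- A vertex cover: a set of vertices meeting every edge. -/
def IsVertexCover (E : Set (Finset V)) (C : Finset V) : Prop :=
  ∀ e ∈ E, (e ∩ C).Nonempty

/-- A minimal vertex cover. -/
def IsMinimalVertexCover (E : Set (Finset V)) (C : Finset V) : Prop :=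
  IsVertexCover E C ∧ ∀ D ⊂ C, ¬ IsVertexCover E D

/-- The covering number: minimum cardinality of a vertex cover. -/
noncomputable def coveringNumber (E : Set (Finset V)) : ℕ :=
  sInf {n : ℕ | ∃ C : Finset V, IsVertexCover E C ∧ C.card = n}

/-- Unmixed: all minimal vertex covers have the same cardinality. -/
def Unmixed (E : Set (Finset V)) : Prop :=
  ∀ C D : Finset V, IsMinimalVertexCover E C → IsMinimalVertexCover E D →
    C.card = D.card

/-- A matching: a set of pairwise disjoint edges. -/
def IsMatching (E : Set (Finset V)) (M : Finset (Finset V)) : Prop :=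
  ↑M ⊆ E ∧ (M : Set (Finset V)).Pairwise Disjoint

/-- The König property: the maximum size of a matching equals the covering number. -/
def HasKonigProperty (E : Set (Finset V)) : Prop :=
  (∃ M : Finset (Finset V), IsMatching E M ∧ M.card = coveringNumber E) ∧
  ∀ M : Finset (Finset V), IsMatching E M → M.card ≤ coveringNumber E

/-- A perfect matching of König type: pairwise disjoint edges `em 0, …, em (g-1)`
whose union is the whole vertex set, where `g` is the covering number. -/
def IsPerfectMatchingKT (E : Set (Finset V)) {g : ℕ} (em : Fin g → Finset V) : Prop :=
  (∀ i, em i ∈ E) ∧ (∀ i j, i ≠ j → Disjoint (em i) (em j)) ∧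
  (∀ x : V, ∃ i, x ∈ em i) ∧ g = coveringNumber E

/-- An independent set: contains no edge. -/
def IsIndependentSet (E : Set (Finset V)) (F : Finset V) : Prop :=
  ∀ e ∈ E, ¬ e ⊆ F

/-- A facet of the independence complex: a maximal independent set. -/
def IsFacet (E : Set (Finset V)) (F : Finset V) : Prop :=
  IsIndependentSet E F ∧ ∀ G : Finset V, IsIndependentSet E G → F ⊆ G → F = G

/-- The set of facets of the independence complex of a clutter. -/
def cFacets (E : Set (Finset V)) : Set (Finset V) := {F | IsFacet E F}

/-- `F : Fin s → Finset V` is a shelling order of the family of facets `Fac`. -/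
def IsShelling {s : ℕ} (Fac : Set (Finset V)) (F : Fin s → Finset V) : Prop :=
  Function.Injective F ∧ (∀ G : Finset V, G ∈ Fac ↔ ∃ i, F i = G) ∧
  ∀ i j : Fin s, i < j →
    ∃ v ∈ F j \ F i, ∃ l : Fin s, l < j ∧ F j \ F l = {v}

/-- A family of facets is shellable if it admits a shelling order. -/
def Shellable (Fac : Set (Finset V)) : Prop :=
  ∃ (s : ℕ) (F : Fin s → Finset V), IsShelling Fac F

/-- A family of facets is pure if all its members have the same cardinality. -/
def PureFamily (Fac : Set (Finset V)) : Prop :=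
  ∀ F ∈ Fac, ∀ G ∈ Fac, F.card = G.card

/-- Pure shellable: pure and shellable. -/
def PureShellable (Fac : Set (Finset V)) : Prop :=
  PureFamily Fac ∧ Shellable Fac

/-- A free vertex: a vertex belonging to exactly one edge. -/
def HasFreeVertex (E : Set (Finset V)) : Prop :=
  ∃ x : V, ∃ e ∈ E, x ∈ e ∧ ∀ f ∈ E, x ∈ f → f = e

/-- A cycle of length `r`: `r` distinct vertices and `r` distinct edges such that each
of the vertices lies in exactly two of the edges and each of the edges contains exactly
two of the vertices. -/
def HasCycleOfLength (E : Set (Finset V)) (r : ℕ) : Prop :=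
  ∃ (v : Fin r → V) (f : Fin r → Finset V),
    Function.Injective v ∧ Function.Injective f ∧ (∀ j, f j ∈ E) ∧
    (∀ i : Fin r, (Finset.univ.filter (fun j => v i ∈ f j)).card = 2) ∧
    (∀ j : Fin r, (Finset.univ.filter (fun i => v i ∈ f j)).card = 2)

/-- A partition of the vertex set into finsets indexed by `Fin m`. -/
def IsPartitionF {m : ℕ} (P : Fin m → Finset V) : Prop :=
  (∀ i j, i ≠ j → Disjoint (P i) (P j)) ∧ ∀ x : V, ∃ i, x ∈ P i

/-- An admissible set with respect to the color classes `Xc 0, …, Xc (d-1)` and the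
matching classes `em 0, …, em (g-1)`: it meets each color class at most once, it meets
precisely the first `e.card` color classes, and the matching indices of its vertices
are nondecreasing along the color classes. -/
def IsAdmissibleSet {d g : ℕ} (Xc : Fin d → Finset V) (em : Fin g → Finset V)
    (e : Finset V) : Prop :=
  (∀ i, (e ∩ Xc i).card ≤ 1) ∧
  (∀ i : Fin d, ((i : ℕ) < e.card ↔ (e ∩ Xc i).Nonempty)) ∧
  (∀ (i i' : Fin d) (j j' : Fin g) (x y : V),
    x ∈ e ∩ Xc i → y ∈ e ∩ Xc i' → x ∈ em j → y ∈ em j' → i ≤ i' → j ≤ j')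

/-- An admissible clutter: the `em i` are admissible edges and all other edges are
admissible sets not contained in any `em i`. -/
def IsAdmissibleClutter {d g : ℕ} (Xc : Fin d → Finset V) (em : Fin g → Finset V)
    (E : Set (Finset V)) : Prop :=
  IsClutter E ∧ (∀ i, em i ∈ E) ∧ (∀ i, IsAdmissibleSet Xc em (em i)) ∧
  ∀ f ∈ E, (∀ i, f ≠ em i) → IsAdmissibleSet Xc em f ∧ ∀ i, ¬ f ⊆ em i

/-- The complete admissible clutter: the `em i` together with all maximal admissible
sets containing no `em i`. -/
def completeAdmissibleClutter {d g : ℕ} (Xc : Fin d → Finset V)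
    (em : Fin g → Finset V) : Set (Finset V) :=
  Set.range em ∪
    {e | IsAdmissibleSet Xc em e ∧ (∀ i, ¬ em i ⊆ e) ∧
      ∀ e', IsAdmissibleSet Xc em e' → e ⊆ e' → e = e'}

/-- The edge set of the complete admissible uniform clutter: all maximal admissible
sets. -/
def maxAdmissible {d g : ℕ} (Xc : Fin d → Finset V)
    (em : Fin g → Finset V) : Set (Finset V) :=
  {e | IsAdmissibleSet Xc em e ∧ ∀ e', IsAdmissibleSet Xc em e' → e ⊆ e' → e = e'}

section

omit [Fintype V]

namespace IsPartitionF

variable {m : ℕ} {P : Fin m → Finset V}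

omit [DecidableEq V] in
theorem eq_of_mem (hP : IsPartitionF P) {v : V} {i j : Fin m} (hi : v ∈ P i)
    (hj : v ∈ P j) : i = j := by
  by_contra h
  exact Finset.disjoint_left.mp (hP.1 i j h) hi hj

theorem card_eq_sum_card_inter (hP : IsPartitionF P) (S : Finset V) :
    S.card = ∑ i, (S ∩ P i).card := by
  rw [← Finset.card_biUnion]
  · congr 1
    ext v
    simpa using fun hv => hP.2 v
  · intro i _ j _ hij
    exact (hP.1 i j hij).mono Finset.inter_subset_right Finset.inter_subset_right

end IsPartitionF

theorem IsMinimalVertexCover.exists_inter_eq_singleton {E : Set (Finset V)} {C : Finset V}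
    (hC : IsMinimalVertexCover E C) {z : V} (hz : z ∈ C) : ∃ f ∈ E, f ∩ C = {z} := by
  have h := hC.2 (C.erase z) (Finset.erase_ssubset hz)
  simp only [IsVertexCover, not_forall, Finset.not_nonempty_iff_eq_empty] at h
  obtain ⟨f, hfE, hf⟩ := h
  rw [Finset.inter_erase, Finset.erase_eq_empty_iff] at hf
  exact ⟨f, hfE, hf.resolve_left (hC.1 f hfE).ne_empty⟩

variable {d g : ℕ} {Xc : Fin d → Finset V} {em : Fin g → Finset V}

namespace IsAdmissibleSet

variable {e : Finset V}

theorem card_le (hXc : IsPartitionF Xc) (he : IsAdmissibleSet Xc em e) : e.card ≤ d := by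
  calc e.card = ∑ c, (e ∩ Xc c).card := hXc.card_eq_sum_card_inter e
    _ ≤ ∑ _c : Fin d, 1 := Finset.sum_le_sum fun c _ => he.1 c
    _ = d := by simp

theorem lt_card (he : IsAdmissibleSet Xc em e) {x : V} {c : Fin d} (hx : x ∈ e)
    (hxc : x ∈ Xc c) : (c : ℕ) < e.card :=
  (he.2.1 c).2 ⟨x, Finset.mem_inter.2 ⟨hx, hxc⟩⟩

theorem card_inter_eq_one (he : IsAdmissibleSet Xc em e) {c : Fin d}
    (hc : (c : ℕ) < e.card) : (e ∩ Xc c).card = 1 :=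
  le_antisymm (he.1 c) (Finset.card_pos.2 ((he.2.1 c).1 hc))

theorem exists_top (hXc : IsPartitionF Xc) (he : IsAdmissibleSet Xc em e)
    (hpos : 0 < e.card) : ∃ c : Fin d, (c : ℕ) + 1 = e.card ∧ (e ∩ Xc c).Nonempty := by
  have hd := he.card_le hXc
  exact ⟨⟨e.card - 1, by omega⟩, by simp only; omega, (he.2.1 _).1 (by simp only; omega)⟩

end IsAdmissibleSet

def splice (Xc : Fin d → Finset V) (k : ℕ) (e f : Finset V) : Finset V :=
  e.filter (fun v => ∃ c : Fin d, (c : ℕ) < k ∧ v ∈ Xc c) ∪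
    f.filter (fun v => ∃ c : Fin d, k ≤ (c : ℕ) ∧ v ∈ Xc c)

def SpliceCompatible (Xc : Fin d → Finset V) (em : Fin g → Finset V) (k : ℕ)
    (e f : Finset V) : Prop :=
  ∀ (c c' : Fin d) (j j' : Fin g) (x y : V), x ∈ e ∩ Xc c → y ∈ f ∩ Xc c' →
    x ∈ em j → y ∈ em j' → (c : ℕ) < k → k ≤ (c' : ℕ) → j ≤ j'

section Splice

variable {k : ℕ} {e f : Finset V}

theorem splice_inter (hXc : IsPartitionF Xc) (c : Fin d) :
    splice Xc k e f ∩ Xc c = if (c : ℕ) < k then e ∩ Xc c else f ∩ Xc c := by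
  have hcol : ∀ {v : V} {c' : Fin d}, v ∈ Xc c → v ∈ Xc c' → c' = c :=
    fun hv hv' => hXc.eq_of_mem hv' hv
  split_ifs with hc <;> ext v <;>
    simp only [splice, Finset.mem_inter, Finset.mem_union, Finset.mem_filter]
  · constructor
    · rintro ⟨⟨hv, -⟩ | ⟨-, c', hc', hvc'⟩, hvc⟩
      · exact ⟨hv, hvc⟩
      · exact absurd (hcol hvc hvc' ▸ hc') (not_le.2 hc)
    · rintro ⟨hv, hvc⟩
      exact ⟨Or.inl ⟨hv, c, hc, hvc⟩, hvc⟩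
  · constructor
    · rintro ⟨⟨-, c', hc', hvc'⟩ | ⟨hv, -⟩, hvc⟩
      · exact absurd (hcol hvc hvc' ▸ hc') hc
      · exact ⟨hv, hvc⟩
    · rintro ⟨hv, hvc⟩
      exact ⟨Or.inr ⟨hv, c, not_lt.1 hc, hvc⟩, hvc⟩

theorem subset_splice (hXc : IsPartitionF Xc) (he : IsAdmissibleSet Xc em e)
    (hk : e.card ≤ k) : e ⊆ splice Xc k e f := by
  intro v hv
  obtain ⟨c, hvc⟩ := hXc.2 v
  have hv' : v ∈ splice Xc k e f ∩ Xc c := by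
    rw [splice_inter hXc, if_pos (lt_of_lt_of_le (he.lt_card hv hvc) hk)]
    exact Finset.mem_inter.2 ⟨hv, hvc⟩
  exact (Finset.mem_inter.1 hv').1

theorem card_splice (hXc : IsPartitionF Xc) (he : IsAdmissibleSet Xc em e)
    (hf : IsAdmissibleSet Xc em f) (hke : k ≤ e.card) (hkf : k ≤ f.card) :
    (splice Xc k e f).card = f.card := by
  rw [hXc.card_eq_sum_card_inter, hXc.card_eq_sum_card_inter f]
  refine Finset.sum_congr rfl fun c _ => ?_
  rw [splice_inter hXc]
  split_ifs with hc
  · rw [he.card_inter_eq_one (by omega), hf.card_inter_eq_one (by omega)]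
  · rfl

theorem IsAdmissibleSet.splice (hXc : IsPartitionF Xc) (he : IsAdmissibleSet Xc em e)
    (hf : IsAdmissibleSet Xc em f) (hke : k ≤ e.card) (hkf : k ≤ f.card)
    (hef : SpliceCompatible Xc em k e f) : IsAdmissibleSet Xc em (splice Xc k e f) := by
  refine ⟨fun c => ?_, fun c => ?_, fun c c' j j' x y hx hy hxj hyj hcc' => ?_⟩
  · rw [splice_inter hXc]
    split_ifs
    exacts [he.1 c, hf.1 c]
  · rw [card_splice hXc he hf hke hkf, splice_inter hXc]
    split_ifs with hc
    · exact iff_of_true (by omega) ((he.2.1 c).1 (by omega))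
    · exact hf.2.1 c
  · rw [splice_inter hXc] at hx hy
    have hcc : (c : ℕ) ≤ c' := hcc'
    split_ifs at hx hy with hc hc'
    · exact he.2.2 c c' j j' x y hx hy hxj hyj hcc'
    · exact hef c c' j j' x y hx hy hxj hyj hc (not_lt.1 hc')
    · omega
    · exact hf.2.2 c c' j j' x y hx hy hxj hyj hcc'

end Splice

theorem disjoint_splice (hXc : IsPartitionF Xc) {k : ℕ} {e f C : Finset V}
    (he : ∀ c : Fin d, (c : ℕ) < k → Disjoint (e ∩ Xc c) C)
    (hf : ∀ c : Fin d, k ≤ (c : ℕ) → Disjoint (f ∩ Xc c) C) :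
    Disjoint (splice Xc k e f) C := by
  refine Finset.disjoint_left.2 fun v hv hvC => ?_
  obtain ⟨c, hvc⟩ := hXc.2 v
  have hv' : v ∈ splice Xc k e f ∩ Xc c := Finset.mem_inter.2 ⟨hv, hvc⟩
  rw [splice_inter hXc] at hv'
  split_ifs at hv' with hc
  exacts [Finset.disjoint_left.1 (he c hc) hv' hvC,
    Finset.disjoint_left.1 (hf c (not_lt.1 hc)) hv' hvC]

section Maximal

variable {e f h : Finset V}

theorem card_le_of_mem_maxAdmissible (hXc : IsPartitionF Xc) (he : e ∈ maxAdmissible Xc em)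
    (hf : IsAdmissibleSet Xc em f) (hef : SpliceCompatible Xc em e.card e f) :
    f.card ≤ e.card := by
  by_contra! hlt
  have heq := he.2 _ (he.1.splice hXc hf le_rfl hlt.le hef) (subset_splice hXc he.1 le_rfl)
  have hcard := card_splice hXc he.1 hf le_rfl hlt.le
  rw [← heq] at hcard
  omega

theorem lt_card_of_mem_maxAdmissible (hXc : IsPartitionF Xc) (hem : IsPartitionF em)
    (he : e ∈ maxAdmissible Xc em) {x : V} {a : Fin d} {i : Fin g} (hx : x ∈ e ∩ Xc a)
    (hxi : x ∈ em i) (hi : IsAdmissibleSet Xc em (em i)) (ha : (a : ℕ) + 1 < (em i).card) :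
    (a : ℕ) + 1 < e.card := by
  have hxa := he.1.lt_card (Finset.mem_inter.1 hx).1 (Finset.mem_inter.1 hx).2
  by_contra! hle
  have hcompat : SpliceCompatible Xc em e.card e (em i) := by
    intro c c' j j' u w hu hw huj hwj hc _
    rw [hem.eq_of_mem hwj (Finset.mem_inter.1 hw).1]
    exact he.1.2.2 c a j i u x hu hx huj hxi (Fin.le_def.2 (by omega))
  have := card_le_of_mem_maxAdmissible hXc he hi hcompat
  omega

theorem mem_maxAdmissible_of_card_eq (hXc : IsPartitionF Xc) (hem : IsPartitionF em)
    (he : e ∈ maxAdmissible Xc em) (hh : IsAdmissibleSet Xc em h) (hcard : h.card = e.card)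
    (htop : ∀ c : Fin d, (c : ℕ) + 1 = e.card → e ∩ Xc c ⊆ h) :
    h ∈ maxAdmissible Xc em := by
  refine ⟨hh, fun e' he' hsub => Finset.eq_of_subset_of_card_le hsub ?_⟩
  rw [hcard]
  rcases Nat.eq_zero_or_pos e.card with h0 | hpos
  · rw [← he.2 e' he' (by simp [Finset.card_eq_zero.1 h0])]
  -- the last vertex `w` of `e` lies in `e'` and separates the matching indices
  obtain ⟨t, ht, w, hw⟩ := he.1.exists_top hXc hpos
  obtain ⟨jw, hjw⟩ := hem.2 w
  have hwe' : w ∈ e' ∩ Xc t := Finset.mem_inter.2 ⟨hsub (htop t ht hw), (Finset.mem_inter.1 hw).2⟩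
  refine card_le_of_mem_maxAdmissible hXc he he' fun c c' j j' x y hx hy hxj hyj hc hc' => ?_
  exact (he.1.2.2 c t j jw x w hx hw hxj hjw (Fin.le_def.2 (by omega))).trans
    (he'.2.2 t c' jw j' w y hwe' hy hjw hyj (Fin.le_def.2 (by omega)))

end Maximal

theorem IsVertexCover.inter_nonempty_of_mem_maxAdmissible {C h : Finset V}
    (hC : IsVertexCover (completeAdmissibleClutter Xc em) C) (hh : h ∈ maxAdmissible Xc em) :
    (h ∩ C).Nonempty := by
  by_cases hj : ∃ j, em j ⊆ h
  · obtain ⟨j, hj⟩ := hj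
    exact (hC _ (Or.inl ⟨j, rfl⟩)).mono (Finset.inter_subset_inter_right hj)
  · push Not at hj
    exact hC h (Or.inr ⟨hh.1, hj, hh.2⟩)

theorem mem_maxAdmissible_of_mem_of_not_subset (hem : IsPartitionF em) {f : Finset V}
    (hf : f ∈ completeAdmissibleClutter Xc em) {x : V} {i : Fin g} (hx : x ∈ f ∩ em i)
    (hfi : ¬ em i ⊆ f) : f ∈ maxAdmissible Xc em := by
  rcases hf with ⟨j, rfl⟩ | hf
  · rw [hem.eq_of_mem (Finset.mem_inter.1 hx).1 (Finset.mem_inter.1 hx).2] at hfi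
    exact (hfi subset_rfl).elim
  · exact ⟨hf.1, hf.2.2⟩

theorem splice_mem_maxAdmissible (hXc : IsPartitionF Xc) (hem : IsPartitionF em) {i : Fin g}
    (hi : IsAdmissibleSet Xc em (em i)) {fx fy : Finset V} (hfx : fx ∈ maxAdmissible Xc em)
    (hfy : fy ∈ maxAdmissible Xc em) {x y : V} {a b : Fin d} (hx : x ∈ fx ∩ Xc a)
    (hxi : x ∈ em i) (hy : y ∈ fy ∩ Xc b) (hyi : y ∈ em i) (hab : a < b) :
    splice Xc (a + 1) fy fx ∈ maxAdmissible Xc em := by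
  have hab' : (a : ℕ) < b := hab
  have hbfy := hfy.1.lt_card (Finset.mem_inter.1 hy).1 (Finset.mem_inter.1 hy).2
  have hafx := lt_card_of_mem_maxAdmissible hXc hem hfx hx hxi hi
    (by have := hi.lt_card hyi (Finset.mem_inter.1 hy).2; omega)
  -- `i` separates the matching indices of `fy` below `b` from those of `fx` above `a`
  have hcompat : SpliceCompatible Xc em (a + 1) fy fx :=
    fun c c' j j' u w hu hw huj hwj hc hc' =>
      (hfy.1.2.2 c b j i u y hu hy huj hyi (Fin.le_def.2 (by omega))).trans
      (hfx.1.2.2 a c' i j' x w hx hw hxi hwj (Fin.le_def.2 (by omega)))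
  refine mem_maxAdmissible_of_card_eq hXc hem hfx
    (hfy.1.splice hXc hfx.1 (by omega) (by omega) hcompat)
    (card_splice hXc hfy.1 hfx.1 (by omega) (by omega)) fun c hc v hv => ?_
  have hv' : v ∈ splice Xc (a + 1) fy fx ∩ Xc c := by
    rw [splice_inter hXc, if_neg (by omega)]
    exact hv
  exact (Finset.mem_inter.1 hv').1

namespace IsMinimalVertexCover

variable {C : Finset V}

theorem le_of_mem_inter_em (hXc : IsPartitionF Xc) (hem : IsPartitionF em)
    (hadm : ∀ i, IsAdmissibleSet Xc em (em i))
    (hC : IsMinimalVertexCover (completeAdmissibleClutter Xc em) C) {i : Fin g} {x y : V}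
    {a b : Fin d} (hx : x ∈ C ∩ em i) (hy : y ∈ C ∩ em i) (hxa : x ∈ Xc a) (hyb : y ∈ Xc b) :
    b ≤ a := by
  by_contra! hab
  have hab' : (a : ℕ) < b := hab
  obtain ⟨hxC, hxi⟩ := Finset.mem_inter.1 hx
  obtain ⟨hyC, hyi⟩ := Finset.mem_inter.1 hy
  obtain ⟨fx, hfxE, hfx⟩ := hC.exists_inter_eq_singleton hxC
  obtain ⟨fy, hfyE, hfy⟩ := hC.exists_inter_eq_singleton hyC
  have hxfx : x ∈ fx := (Finset.mem_inter.1 (hfx ▸ Finset.mem_singleton_self x)).1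
  have hyfy : y ∈ fy := (Finset.mem_inter.1 (hfy ▸ Finset.mem_singleton_self y)).1
  have hcolour : ∀ {v : V} {c : Fin d}, v ∈ Xc c → (v = x → c = a) ∧ (v = y → c = b) :=
    fun hvc => ⟨fun h => hXc.eq_of_mem hvc (h ▸ hxa), fun h => hXc.eq_of_mem hvc (h ▸ hyb)⟩
  have hyfx : y ∉ fx := fun h => by
    have := (hcolour hyb).1 (Finset.mem_singleton.1 (hfx ▸ Finset.mem_inter.2 ⟨h, hyC⟩))
    omega
  have hxfy : x ∉ fy := fun h => by
    have := (hcolour hxa).2 (Finset.mem_singleton.1 (hfy ▸ Finset.mem_inter.2 ⟨h, hxC⟩))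
    omega
  have hfxmax := mem_maxAdmissible_of_mem_of_not_subset hem hfxE
    (Finset.mem_inter.2 ⟨hxfx, hxi⟩) fun h => hyfx (h hyi)
  have hfymax := mem_maxAdmissible_of_mem_of_not_subset hem hfyE
    (Finset.mem_inter.2 ⟨hyfy, hyi⟩) fun h => hxfy (h hxi)
  have hmax := splice_mem_maxAdmissible hXc hem (hadm i) hfxmax hfymax
    (Finset.mem_inter.2 ⟨hxfx, hxa⟩) hxi (Finset.mem_inter.2 ⟨hyfy, hyb⟩) hyi hab
  have hdisj : Disjoint (splice Xc (a + 1) fy fx) C := by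
    refine disjoint_splice hXc (fun c hc => ?_) (fun c hc => ?_) <;>
      refine Finset.disjoint_left.2 fun v hv hvC => ?_ <;>
      obtain ⟨hv, hvc⟩ := Finset.mem_inter.1 hv
    · have := (hcolour hvc).2 (Finset.mem_singleton.1 (hfy ▸ Finset.mem_inter.2 ⟨hv, hvC⟩))
      omega
    · have := (hcolour hvc).1 (Finset.mem_singleton.1 (hfx ▸ Finset.mem_inter.2 ⟨hv, hvC⟩))
      omega
  exact Finset.not_disjoint_iff_nonempty_inter.2
    (hC.1.inter_nonempty_of_mem_maxAdmissible hmax) hdisj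

theorem card_inter_em_eq_one (hXc : IsPartitionF Xc) (hem : IsPartitionF em)
    (hadm : ∀ i, IsAdmissibleSet Xc em (em i))
    (hC : IsMinimalVertexCover (completeAdmissibleClutter Xc em) C) (i : Fin g) :
    (C ∩ em i).card = 1 := by
  refine le_antisymm (Finset.card_le_one.2 fun x hx y hy => ?_) ?_
  · obtain ⟨a, hxa⟩ := hXc.2 x
    obtain ⟨b, hyb⟩ := hXc.2 y
    have hab : a = b := le_antisymm (hC.le_of_mem_inter_em hXc hem hadm hy hx hyb hxa)
      (hC.le_of_mem_inter_em hXc hem hadm hx hy hxa hyb)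
    exact Finset.card_le_one.1 ((hadm i).1 a) x
      (Finset.mem_inter.2 ⟨(Finset.mem_inter.1 hx).2, hxa⟩) y
      (Finset.mem_inter.2 ⟨(Finset.mem_inter.1 hy).2, hab ▸ hyb⟩)
  · rw [Finset.inter_comm]
    exact Finset.card_pos.2 (hC.1 _ (Or.inl ⟨i, rfl⟩))

theorem card_eq (hXc : IsPartitionF Xc) (hem : IsPartitionF em)
    (hadm : ∀ i, IsAdmissibleSet Xc em (em i))
    (hC : IsMinimalVertexCover (completeAdmissibleClutter Xc em) C) : C.card = g := by
  simp [hem.card_eq_sum_card_inter C, hC.card_inter_em_eq_one hXc hem hadm]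

end IsMinimalVertexCover

end

theorem complete_admissible_clutter_unmixed_general
    {d g : ℕ} (Xc : Fin d → Finset V) (em : Fin g → Finset V)
    (hXc : IsPartitionF Xc) (hem : IsPartitionF em)
    (hadm : ∀ i, IsAdmissibleSet Xc em (em i)) :
    Unmixed (completeAdmissibleClutter Xc em) := fun _ _ hC hD =>
  (hC.card_eq hXc hem hadm).trans (hD.card_eq hXc hem hadm).symm

/-- A complete admissible clutter is unmixed. -/
theorem complete_admissible_clutter_unmixed
    {d g : ℕ} (Xc : Fin d → Finset V) (em : Fin g → Finset V)
    (hXc : IsPartitionF Xc) (hem : IsPartitionF em)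
    (hcompat : ∀ i j, (em i ∩ Xc j).card ≤ 1)
    (hadm : ∀ i, IsAdmissibleSet Xc em (em i)) :
    Unmixed (completeAdmissibleClutter Xc em) :=
  complete_admissible_clutter_unmixed_general Xc em hXc hem hadm
end

section
/- If C is a complete admissible uniform clutter, then the simplicial complex generated by the edges of C (the complex whose faces are the subsets of edges of C, so whose facets are precisely the edges of C) is pure shellable. -/
variable {V : Type} [Fintype V] [DecidableEq V]

/-! The maximal admissible sets are exactly the transversals `{x_{f 1, 1}, …, x_{f d, d}}` of
the grid `x_{i, j} ∈ e_i ∩ X^j` along monotone `f : Fin d → Fin g`. Ordering them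
lexicographically in `f` is a shelling: if `a < b` first differ at `p`, then lowering `b p` to
`a p` gives a monotone `c < b` whose transversal misses only the vertex `x_{b p, p}` of that
of `b`, and this vertex is not in the transversal of `a`. -/

section

omit [Fintype V]

theorem shellable_image_of_exchange {ι : Type*} [LinearOrder ι] (S : Finset ι)
    (F : ι → Finset V) (hF : Set.InjOn F S)
    (hex : ∀ a ∈ S, ∀ b ∈ S, a < b →
      ∃ v ∈ F b \ F a, ∃ c ∈ S, c < b ∧ F b \ F c = {v}) :
    Shellable (F '' S) := by
  set σ := S.orderEmbOfFin rfl
  refine ⟨S.card, F ∘ σ, ?_, fun G => ?_, fun i j hij => ?_⟩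
  · exact fun k l h =>
      σ.injective (hF (S.orderEmbOfFin_mem rfl k) (S.orderEmbOfFin_mem rfl l) h)
  · rw [← S.range_orderEmbOfFin rfl, ← Set.range_comp]
    rfl
  · obtain ⟨v, hv, c, hcS, hc, hvc⟩ := hex _ (S.orderEmbOfFin_mem rfl i) _
      (S.orderEmbOfFin_mem rfl j) (σ.lt_iff_lt.mpr hij)
    rw [← Finset.mem_coe, ← S.range_orderEmbOfFin rfl] at hcS
    obtain ⟨l, rfl⟩ := hcS
    exact ⟨v, hv, l, σ.lt_iff_lt.mp hc, hvc⟩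

theorem pureShellable_singleton (F : Finset V) : PureShellable {F} := by
  refine ⟨fun _ h₁ _ h₂ => by rw [h₁, h₂], ?_⟩
  simpa using shellable_image_of_exchange (Finset.univ : Finset Unit) (fun _ => F)
    (Set.injOn_of_injective fun _ _ _ => rfl) (fun a _ b _ hab => absurd hab (by simp))

theorem monotone_update_of_eq_below {ι β : Type*} [LinearOrder ι] [DecidableEq ι] [Preorder β]
    {a b : ι → β} (ha : Monotone a) (hb : Monotone b) {p : ι} (hpre : ∀ q < p, a q = b q)
    (hp : a p ≤ b p) : Monotone (Function.update b p (a p)) := by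
  intro q q' hqq'
  rcases eq_or_ne p q with rfl | hq <;> rcases eq_or_ne p q' with rfl | hq'
  · exact le_rfl
  · rw [Function.update_self, Function.update_of_ne hq'.symm]
    exact hp.trans (hb hqq')
  · rw [Function.update_self, Function.update_of_ne hq.symm,
      ← hpre q (lt_of_le_of_ne hqq' hq.symm)]
    exact ha hqq'
  · rw [Function.update_of_ne hq.symm, Function.update_of_ne hq'.symm]
    exact hb hqq'

omit [DecidableEq V] in
theorem IsPartitionF.eq_of_mem_of_mem {m : ℕ} {P : Fin m → Finset V} (hP : IsPartitionF P)
    {x : V} {i j : Fin m} (hi : x ∈ P i) (hj : x ∈ P j) : i = j := by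
  by_contra h
  exact Finset.disjoint_left.mp (hP.1 i j h) hi hj

theorem IsAdmissibleSet.card_le_s14 {d g : ℕ} {Xc : Fin d → Finset V} {em : Fin g → Finset V}
    (hXc : IsPartitionF Xc) {e : Finset V}
    (he : IsAdmissibleSet Xc em e) : e.card ≤ d := by
  choose color hcolor using hXc.2
  calc e.card ≤ (Finset.univ : Finset (Fin d)).card := by
        refine Finset.card_le_card_of_injOn color (fun x _ => Finset.mem_univ _) ?_
        intro x hx y hy hxy
        exact Finset.card_le_one.mp (he.1 (color x)) x (Finset.mem_inter.mpr ⟨hx, hcolor x⟩)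
          y (Finset.mem_inter.mpr ⟨hy, hxy ▸ hcolor y⟩)
    _ = d := Finset.card_fin d

theorem IsAdmissibleSet.nonempty_of_le {d g : ℕ} {Xc : Fin d → Finset V}
    {em : Fin g → Finset V} {e : Finset V} (he : IsAdmissibleSet Xc em e)
    {i i' : Fin d} (hii' : i ≤ i') (hne : (e ∩ Xc i').Nonempty) : (e ∩ Xc i).Nonempty :=
  (he.2.1 i).mp (lt_of_le_of_lt hii' ((he.2.1 i').mpr hne))

namespace AdmissibleClutter

variable {d g : ℕ} {Xc : Fin d → Finset V} {em : Fin g → Finset V}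

section Cell

variable (hcompat : ∀ i j, (em i ∩ Xc j).card = 1)

noncomputable def cell (i : Fin g) (j : Fin d) : V :=
  (Finset.card_eq_one.mp (hcompat i j)).choose

theorem inter_eq_singleton_cell (i : Fin g) (j : Fin d) : em i ∩ Xc j = {cell hcompat i j} :=
  (Finset.card_eq_one.mp (hcompat i j)).choose_spec

theorem eq_cell_iff {x : V} {i : Fin g} {j : Fin d} :
    x = cell hcompat i j ↔ x ∈ em i ∧ x ∈ Xc j := by
  rw [← Finset.mem_inter, inter_eq_singleton_cell hcompat, Finset.mem_singleton]

theorem cell_mem_em (i : Fin g) (j : Fin d) : cell hcompat i j ∈ em i :=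
  ((eq_cell_iff hcompat).mp rfl).1

theorem cell_mem_Xc (i : Fin g) (j : Fin d) : cell hcompat i j ∈ Xc j :=
  ((eq_cell_iff hcompat).mp rfl).2

theorem cell_inj (hXc : IsPartitionF Xc) (hem : IsPartitionF em) {i i' : Fin g} {j j' : Fin d} :
    cell hcompat i j = cell hcompat i' j' ↔ i = i' ∧ j = j' := by
  refine ⟨fun h => ⟨?_, ?_⟩, fun ⟨hi, hj⟩ => hi ▸ hj ▸ rfl⟩
  · exact hem.eq_of_mem_of_mem (cell_mem_em hcompat i j) (h ▸ cell_mem_em hcompat i' j')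
  · exact hXc.eq_of_mem_of_mem (cell_mem_Xc hcompat i j) (h ▸ cell_mem_Xc hcompat i' j')

noncomputable def transversal (f : Fin d → Fin g) : Finset V :=
  Finset.univ.image fun j => cell hcompat (f j) j

theorem mem_transversal {f : Fin d → Fin g} {x : V} :
    x ∈ transversal hcompat f ↔ ∃ j, cell hcompat (f j) j = x := by
  simp [transversal]

theorem cell_mem_transversal_iff (hXc : IsPartitionF Xc) (hem : IsPartitionF em)
    {f : Fin d → Fin g} {i : Fin g} {j : Fin d} :
    cell hcompat i j ∈ transversal hcompat f ↔ f j = i := by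
  simp only [mem_transversal, cell_inj hcompat hXc hem]
  exact ⟨fun ⟨_, hi, hj⟩ => hj ▸ hi, fun h => ⟨j, h, rfl⟩⟩

theorem transversal_inter (hXc : IsPartitionF Xc) (f : Fin d → Fin g) (j : Fin d) :
    transversal hcompat f ∩ Xc j = {cell hcompat (f j) j} := by
  ext x
  simp only [Finset.mem_inter, mem_transversal, Finset.mem_singleton]
  constructor
  · rintro ⟨⟨j', rfl⟩, hx⟩
    rw [hXc.eq_of_mem_of_mem (cell_mem_Xc hcompat _ _) hx]
  · rintro rfl
    exact ⟨⟨j, rfl⟩, cell_mem_Xc hcompat _ _⟩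

theorem card_transversal (hXc : IsPartitionF Xc) (hem : IsPartitionF em) (f : Fin d → Fin g) :
    (transversal hcompat f).card = d := by
  rw [transversal, Finset.card_image_of_injective, Finset.card_univ, Fintype.card_fin]
  exact fun j j' h => ((cell_inj hcompat hXc hem).mp h).2

theorem transversal_injective (hXc : IsPartitionF Xc) (hem : IsPartitionF em) :
    Function.Injective (transversal hcompat : (Fin d → Fin g) → Finset V) := fun _ _ h =>
  funext fun j => (cell_mem_transversal_iff hcompat hXc hem).mp
    (h ▸ (mem_transversal hcompat).mpr ⟨j, rfl⟩)

theorem transversal_sdiff_update (hXc : IsPartitionF Xc) (hem : IsPartitionF em)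
    (f : Fin d → Fin g) {p : Fin d} {i : Fin g} (hi : i ≠ f p) :
    transversal hcompat f \ transversal hcompat (Function.update f p i) =
      {cell hcompat (f p) p} := by
  ext x
  simp only [Finset.mem_sdiff, Finset.mem_singleton, mem_transversal]
  constructor
  · rintro ⟨⟨q, rfl⟩, hx⟩
    by_contra hqp
    refine hx ⟨q, ?_⟩
    rw [Function.update_of_ne]
    rintro rfl
    exact hqp rfl
  · rintro rfl
    refine ⟨⟨p, rfl⟩, fun ⟨q, hq⟩ => hi ?_⟩
    obtain ⟨hq, rfl⟩ := (cell_inj hcompat hXc hem).mp hq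
    rwa [Function.update_self] at hq

theorem isAdmissibleSet_transversal (hXc : IsPartitionF Xc) (hem : IsPartitionF em)
    {f : Fin d → Fin g} (hf : Monotone f) : IsAdmissibleSet Xc em (transversal hcompat f) := by
  simp only [IsAdmissibleSet, transversal_inter hcompat hXc, card_transversal hcompat hXc hem,
    Finset.card_singleton, le_refl, Fin.is_lt, Finset.singleton_nonempty, Finset.mem_singleton,
    iff_self, implies_true, true_and]
  rintro i i' j j' x y rfl rfl hx hy hii'
  rw [hem.eq_of_mem_of_mem hx (cell_mem_em hcompat _ _),
    hem.eq_of_mem_of_mem hy (cell_mem_em hcompat _ _)]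
  exact hf hii'

end Cell

/-- The missing color classes are filled with the vertices of the last matching edge. -/
theorem exists_monotone_subset_transversal (hXc : IsPartitionF Xc)
    (hem : IsPartitionF em) (hcompat : ∀ i j, (em i ∩ Xc j).card = 1) {n : ℕ} (hg : g = n + 1)
    {e : Finset V} (he : IsAdmissibleSet Xc em e) :
    ∃ f : Fin d → Fin g, Monotone f ∧ e ⊆ transversal hcompat f := by
  subst hg
  choose idx hidx using hem.2
  let f : Fin d → Fin (n + 1) := fun i =>
    if h : (e ∩ Xc i).Nonempty then idx h.choose else Fin.last n
  refine ⟨f, fun i i' hii' => ?_, fun x hx => ?_⟩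
  · by_cases hi' : (e ∩ Xc i').Nonempty
    · have hi := he.nonempty_of_le hii' hi'
      simp only [f, dif_pos hi, dif_pos hi']
      exact he.2.2 i i' _ _ _ _ hi.choose_spec hi'.choose_spec (hidx _) (hidx _) hii'
    · simp only [f, dif_neg hi']
      exact Fin.le_last _
  · obtain ⟨i, hxi⟩ := hXc.2 x
    have hi : (e ∩ Xc i).Nonempty := ⟨x, Finset.mem_inter.mpr ⟨hx, hxi⟩⟩
    have hx_eq : x = hi.choose :=
      Finset.card_le_one.mp (he.1 i) _ (Finset.mem_inter.mpr ⟨hx, hxi⟩) _ hi.choose_spec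
    refine (mem_transversal hcompat).mpr ⟨i, ?_⟩
    simp only [f, dif_pos hi]
    rw [hx_eq, eq_comm, eq_cell_iff hcompat]
    exact ⟨hidx _, (Finset.mem_inter.mp hi.choose_spec).2⟩

theorem maxAdmissible_eq_image_transversal (hXc : IsPartitionF Xc) (hem : IsPartitionF em)
    (hcompat : ∀ i j, (em i ∩ Xc j).card = 1) (hg : g ≠ 0) :
    maxAdmissible Xc em = transversal hcompat '' {f | Monotone f} := by
  obtain ⟨n, hn⟩ := Nat.exists_eq_succ_of_ne_zero hg
  ext e
  constructor
  · rintro ⟨he, hmax⟩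
    obtain ⟨f, hf, hef⟩ := exists_monotone_subset_transversal hXc hem hcompat hn he
    exact ⟨f, hf, (hmax _ (isAdmissibleSet_transversal hcompat hXc hem hf) hef).symm⟩
  · rintro ⟨f, hf, rfl⟩
    refine ⟨isAdmissibleSet_transversal hcompat hXc hem hf, fun e' he' hsub => ?_⟩
    exact Finset.eq_of_subset_of_card_le hsub
      ((card_transversal hcompat hXc hem f).symm ▸ he'.card_le_s14 hXc)

theorem maxAdmissible_of_isEmpty [IsEmpty V] : maxAdmissible Xc em = {∅} := by
  have hempty (e : Finset V) : e = ∅ := Finset.eq_empty_of_forall_notMem fun x => isEmptyElim x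
  ext e
  simp [maxAdmissible, IsAdmissibleSet, hempty]

theorem exists_transversal_sdiff_eq_singleton (hXc : IsPartitionF Xc) (hem : IsPartitionF em)
    (hcompat : ∀ i j, (em i ∩ Xc j).card = 1) {a b : Fin d → Fin g} (ha : Monotone a)
    (hb : Monotone b) (hab : toLex a < toLex b) :
    ∃ v ∈ transversal hcompat b \ transversal hcompat a, ∃ c : Fin d → Fin g, Monotone c ∧
      toLex c < toLex b ∧ transversal hcompat b \ transversal hcompat c = {v} := by
  obtain ⟨p, hpre, hp⟩ := hab
  have hv : cell hcompat (b p) p ∉ transversal hcompat a := by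
    rw [cell_mem_transversal_iff hcompat hXc hem]
    exact hp.ne
  refine ⟨_, Finset.mem_sdiff.mpr ⟨(mem_transversal hcompat).mpr ⟨p, rfl⟩, hv⟩,
    Function.update b p (a p), monotone_update_of_eq_below ha hb hpre hp.le,
    Pi.toLex_update_lt_self_iff.mpr hp, transversal_sdiff_update hcompat hXc hem b hp.ne⟩

theorem shellable_image_transversal (hXc : IsPartitionF Xc) (hem : IsPartitionF em)
    (hcompat : ∀ i j, (em i ∩ Xc j).card = 1) :
    Shellable (transversal hcompat '' {f | Monotone f}) := by
  let S : Finset (Lex (Fin d → Fin g)) := Finset.univ.filter fun f => Monotone (ofLex f)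
  have hS : transversal hcompat '' {f | Monotone f} = (transversal hcompat ∘ ofLex) '' S := by
    ext e
    simp [S]
  rw [hS]
  refine shellable_image_of_exchange S _
    (fun _ _ _ _ h => ofLex.injective (transversal_injective hcompat hXc hem h)) ?_
  intro a ha b hb hab
  simp only [S, Finset.mem_filter, Finset.mem_univ, true_and] at ha hb
  obtain ⟨v, hv, c, hc, hcb, hvc⟩ :=
    exists_transversal_sdiff_eq_singleton hXc hem hcompat ha hb hab
  exact ⟨v, hv, toLex c, by simpa [S] using hc, hcb, hvc⟩

end AdmissibleClutter

end

open AdmissibleClutter in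
/-- The simplicial complex generated by the edges of a complete admissible
uniform clutter (whose facets are precisely the edges) is pure shellable. -/
theorem complete_admissible_uniform_edges_pure_shellable
    {d g : ℕ} (Xc : Fin d → Finset V) (em : Fin g → Finset V)
    (hXc : IsPartitionF Xc) (hem : IsPartitionF em)
    (hcompat : ∀ i j, (em i ∩ Xc j).card = 1) :
    PureShellable (maxAdmissible Xc em) := by
  obtain rfl | hg := eq_or_ne g 0
  · have : IsEmpty V := ⟨fun x => (hem.2 x).choose.elim0⟩
    rw [maxAdmissible_of_isEmpty]
    exact pureShellable_singleton ∅
  rw [maxAdmissible_eq_image_transversal hXc hem hcompat hg]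
  refine ⟨?_, shellable_image_transversal hXc hem hcompat⟩
  rintro _ ⟨f, -, rfl⟩ _ ⟨f', -, rfl⟩
  rw [card_transversal hcompat hXc hem, card_transversal hcompat hXc hem]
end

section
/- Let G be a bipartite graph without isolated vertices, with bipartition V_1 = {x_1,…,x_g} and V_2 = {y_1,…,y_g}, such that {x_i, y_i} is an edge of G for all i (so the edges e_i = {x_i, y_i} form a perfect matching). Let Γ = Δ_G^{[g]} be the simplicial complex whose facets are the independent sets of G of cardinality g. Then Γ is pure shellable if and only if the indices can be reordered so that {x_i, y_j} ∈ E(G) implies i ≤ j; that is, if and only if there is a permutation π of {1,…,g} such that every edge {x_i, y_j} of G satisfies π(i) ≤ π(j). -/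
variable {V : Type} [Fintype V] [DecidableEq V]

/-- An independent set of a simple graph: a finset of vertices containing no edge. -/
def GraphIndep {W : Type} (G : SimpleGraph W) (F : Finset W) : Prop :=
  ∀ a ∈ F, ∀ b ∈ F, ¬ G.Adj a b


/-! An independent set of size `g` contains exactly one of `xᵢ, yᵢ` for every `i`, since the
`xᵢyᵢ` are edges; so the facets are the sets `F_S = {xᵢ | i ∈ S} ∪ {yᵢ | i ∉ S}` (`disjSumCompl S`)
for `S` closed under `i → j :⇔ xᵢyⱼ ∈ E`, and `F_S \ F_T = (S \ T) ⊔ (T \ S)`.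

Given `π`, listing the facets by decreasing `|S|` is a shelling: if `|S| ≤ |T|` and `S ≠ T`,
adding to `S` the `π`-largest element of `T \ S` keeps it closed. Conversely, a shelling links
every facet to the first one by steps that change `S` in a single element. If `i ≠ j` lay in
the same closed sets, no step could change whether `i ∈ S`, although `∅` and the full set are
both closed. So for every edge `xᵢyⱼ` with `i ≠ j` strictly more closed sets contain `j` than
`i`, and sorting by this count gives `π`. -/

open Finset

theorem shellable_of_rank {W : Type} [DecidableEq W] {Fac : Set (Finset W)} (hFac : Fac.Finite)
    (w : Finset W → ℕ)
    (h : ∀ F ∈ Fac, ∀ F' ∈ Fac, F' ≠ F → w F' ≤ w F →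
      ∃ v ∈ F \ F', ∃ H ∈ Fac, w H < w F ∧ F \ H = {v}) :
    Shellable Fac := by
  let e := hFac.toFinset.equivFin.symm
  let σ := Tuple.sort (w ∘ fun i => (e i : Finset W))
  let F : Fin _ → Finset W := fun i => e (σ i)
  have hmono : Monotone (w ∘ F) := Tuple.monotone_sort (w ∘ fun i => (e i : Finset W))
  have hmem : ∀ H, H ∈ Fac ↔ ∃ i, F i = H := by
    refine fun H => ⟨fun hH => ⟨σ⁻¹ (e.symm ⟨H, hFac.mem_toFinset.2 hH⟩), by simp [F]⟩, ?_⟩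
    rintro ⟨i, rfl⟩
    exact hFac.mem_toFinset.1 (e (σ i)).2
  refine ⟨_, F, Subtype.val_injective.comp (e.injective.comp σ.injective), hmem, fun i j hij => ?_⟩
  have hne : F i ≠ F j := fun h' =>
    hij.ne (σ.injective (e.injective (Subtype.val_injective h')))
  obtain ⟨v, hv, H, hH, hwH, hsd⟩ :=
    h (F j) ((hmem _).2 ⟨j, rfl⟩) (F i) ((hmem _).2 ⟨i, rfl⟩) hne (hmono hij.le)
  obtain ⟨l, rfl⟩ := (hmem H).1 hH
  exact ⟨v, hv, l, lt_of_not_ge fun hjl => (hmono hjl).not_gt hwH, hsd⟩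

theorem Shellable.iff_of_sdiff_eq_singleton {W : Type} [DecidableEq W] {Fac : Set (Finset W)}
    (h : Shellable Fac) (P : Finset W → Prop)
    (hP : ∀ F ∈ Fac, ∀ H ∈ Fac, ∀ v, F \ H = {v} → (P F ↔ P H))
    {F H : Finset W} (hF : F ∈ Fac) (hH : H ∈ Fac) : P F ↔ P H := by
  obtain ⟨s, f, -, hmem, hshell⟩ := h
  obtain ⟨i, rfl⟩ := (hmem F).1 hF
  obtain ⟨j, rfl⟩ := (hmem H).1 hH
  let i₀ : Fin s := ⟨0, i.pos⟩
  have hconst : ∀ k, P (f k) ↔ P (f i₀) := by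
    intro k
    induction k using WellFoundedLT.induction with
    | _ k ih =>
      rcases Nat.eq_zero_or_pos k with hk | hk
      · rw [show k = i₀ from Fin.ext hk]
      · obtain ⟨v, -, l, hlk, hsd⟩ := hshell i₀ k hk
        exact (hP _ ((hmem _).2 ⟨k, rfl⟩) _ ((hmem _).2 ⟨l, rfl⟩) v hsd).trans (ih l hlk)
  exact (hconst i).trans (hconst j).symm

def IsClosedUnder {β : Type*} (r : β → β → Prop) (S : Finset β) : Prop :=
  ∀ a ∈ S, ∀ b, r a b → b ∈ S

section DisjSumCompl

variable {α : Type} [DecidableEq α]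

theorem IsClosedUnder.insert_of_forall_le {β : Type*} [LinearOrder β] {r : α → α → Prop}
    {f : α → β} (hf : Function.Injective f) (hr : ∀ a b, r a b → f a ≤ f b)
    {S T : Finset α} (hS : IsClosedUnder r S) (hT : IsClosedUnder r T) {c : α} (hc : c ∈ T \ S)
    (hmax : ∀ x ∈ T \ S, f x ≤ f c) : IsClosedUnder r (insert c S) := by
  intro a ha b hab
  rw [mem_insert] at ha ⊢
  rcases ha with rfl | ha
  · by_cases hb : b ∈ S
    · exact .inr hb
    · have hbT := hT a (mem_sdiff.1 hc).1 b hab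
      exact .inl (hf (le_antisymm (hmax b (mem_sdiff.2 ⟨hbT, hb⟩)) (hr a b hab)))
  · exact .inr (hS a ha b hab)

variable [Fintype α]

def disjSumCompl (S : Finset α) : Finset (α ⊕ α) := S.disjSum Sᶜ

@[simp] theorem inl_mem_disjSumCompl {S : Finset α} {a : α} :
    Sum.inl a ∈ disjSumCompl S ↔ a ∈ S := inl_mem_disjSum

@[simp] theorem inr_mem_disjSumCompl {S : Finset α} {a : α} :
    Sum.inr a ∈ disjSumCompl S ↔ a ∉ S := by
  simp [disjSumCompl]

theorem card_disjSumCompl (S : Finset α) : #(disjSumCompl S) = Fintype.card α := by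
  rw [disjSumCompl, card_disjSum, card_add_card_compl]

theorem disjSumCompl_toLeft {F : Finset (α ⊕ α)} (hdisj : ∀ a, Sum.inl a ∈ F → Sum.inr a ∉ F)
    (hcard : #F = Fintype.card α) : disjSumCompl F.toLeft = F := by
  rw [disjSumCompl, disjSum_eq_iff]
  refine ⟨rfl, (eq_of_subset_of_card_le (fun a ha => ?_) ?_).symm⟩
  · exact mem_compl.2 fun ha' => hdisj a (mem_toLeft.1 ha') (mem_toRight.1 ha)
  · have := card_toLeft_add_card_toRight (u := F)
    rw [card_compl]
    omega

theorem disjSumCompl_sdiff (S T : Finset α) :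
    disjSumCompl S \ disjSumCompl T = (S \ T).disjSum (T \ S) := by
  ext (a | a) <;> simp [and_comm]

theorem mem_iff_mem_of_disjSumCompl_sdiff_eq_singleton {S T : Finset α} {v : α ⊕ α}
    (h : disjSumCompl S \ disjSumCompl T = {v}) {x : α} (hl : Sum.inl x ≠ v)
    (hr : Sum.inr x ≠ v) : x ∈ S ↔ x ∈ T := by
  constructor
  · intro hS
    by_contra hT
    exact hl (mem_singleton.1 (h ▸ by simp [hS, hT]))
  · intro hT
    by_contra hS
    exact hr (mem_singleton.1 (h ▸ by simp [hS, hT]))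

section Graph

variable {G : SimpleGraph (α ⊕ α)}

theorem graphIndep_disjSumCompl_iff
    (hbip : (∀ a b, ¬ G.Adj (Sum.inl a) (Sum.inl b)) ∧ (∀ a b, ¬ G.Adj (Sum.inr a) (Sum.inr b)))
    {S : Finset α} :
    GraphIndep G (disjSumCompl S) ↔ IsClosedUnder (fun a b => G.Adj (.inl a) (.inr b)) S := by
  constructor
  · intro h a ha b hab
    by_contra hb
    exact h _ (inl_mem_disjSumCompl.2 ha) _ (inr_mem_disjSumCompl.2 hb) hab
  · rintro hS (a | a) ha (b | b) hb hab
    · exact hbip.1 a b hab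
    · exact inr_mem_disjSumCompl.1 hb (hS a (inl_mem_disjSumCompl.1 ha) b hab)
    · exact inr_mem_disjSumCompl.1 ha (hS b (inl_mem_disjSumCompl.1 hb) a hab.symm)
    · exact hbip.2 a b hab

theorem setOf_graphIndep_card_eq_image_disjSumCompl
    (hbip : (∀ a b, ¬ G.Adj (Sum.inl a) (Sum.inl b)) ∧ (∀ a b, ¬ G.Adj (Sum.inr a) (Sum.inr b)))
    (hmatch : ∀ a, G.Adj (Sum.inl a) (Sum.inr a)) :
    {F : Finset (α ⊕ α) | GraphIndep G F ∧ #F = Fintype.card α} =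
      disjSumCompl '' {S | IsClosedUnder (fun a b => G.Adj (.inl a) (.inr b)) S} := by
  ext F
  constructor
  · rintro ⟨hind, hcard⟩
    have hF := disjSumCompl_toLeft (fun a ha hb => hind _ ha _ hb (hmatch a)) hcard
    refine ⟨F.toLeft, ?_, hF⟩
    rw [← hF] at hind
    exact (graphIndep_disjSumCompl_iff hbip).1 hind
  · rintro ⟨S, hS, rfl⟩
    exact ⟨(graphIndep_disjSumCompl_iff hbip).2 hS, card_disjSumCompl S⟩

end Graph

theorem shellable_image_disjSumCompl_of_monotone {β : Type*} [LinearOrder β]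
    {r : α → α → Prop} {f : α → β} (hf : Function.Injective f)
    (hr : ∀ a b, r a b → f a ≤ f b) :
    Shellable (disjSumCompl '' {S | IsClosedUnder r S}) := by
  refine shellable_of_rank (Set.toFinite _) (fun F => #F.toRight) ?_
  rintro _ ⟨S, hS, rfl⟩ _ ⟨T, hT, rfl⟩ hne hle
  simp only [disjSumCompl, toRight_disjSum, card_compl] at hle
  have hTS : (T \ S).Nonempty := by
    rw [sdiff_nonempty]
    intro hsub
    have := card_le_univ S
    have := card_le_univ T
    exact hne (congrArg _ (eq_of_subset_of_card_le hsub (by omega)))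
  obtain ⟨c, hc, hmax⟩ := exists_max_image (T \ S) f hTS
  rw [mem_sdiff] at hc
  refine ⟨.inr c, by simp [hc.1, hc.2], disjSumCompl (insert c S),
    ⟨_, hS.insert_of_forall_le hf hr hT (mem_sdiff.2 hc) hmax, rfl⟩, ?_, ?_⟩
  · simp only [disjSumCompl, toRight_disjSum, card_compl, card_insert_of_notMem hc.2]
    have := card_le_univ (insert c S)
    rw [card_insert_of_notMem hc.2] at this
    omega
  · rw [disjSumCompl_sdiff]
    ext (x | x) <;> simp +contextual [hc.2]

theorem exists_separating_of_shellable {𝒞 : Set (Finset α)} (h : Shellable (disjSumCompl '' 𝒞))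
    (h₀ : ∅ ∈ 𝒞) (h₁ : univ ∈ 𝒞) {a b : α} (hab : a ≠ b) : ∃ S ∈ 𝒞, ¬ (a ∈ S ↔ b ∈ S) := by
  by_contra! hsep
  have hconst := h.iff_of_sdiff_eq_singleton (fun F => Sum.inl a ∈ F) ?_
    (Set.mem_image_of_mem _ h₀) (Set.mem_image_of_mem _ h₁)
  · simp at hconst
  rintro _ ⟨S, hS, rfl⟩ _ ⟨T, hT, rfl⟩ v hv
  simp only [inl_mem_disjSumCompl]
  by_cases ha : Sum.inl a = v ∨ Sum.inr a = v
  · rw [hsep S hS, hsep T hT]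
    exact mem_iff_mem_of_disjSumCompl_sdiff_eq_singleton hv
      (by rcases ha with rfl | rfl <;> simp [hab.symm])
      (by rcases ha with rfl | rfl <;> simp [hab.symm])
  · rw [not_or] at ha
    exact mem_iff_mem_of_disjSumCompl_sdiff_eq_singleton hv ha.1 ha.2

end DisjSumCompl

theorem exists_perm_lt_of_apply_lt {n : ℕ} {β : Type*} [LinearOrder β] (f : Fin n → β) :
    ∃ π : Equiv.Perm (Fin n), ∀ i j, f i < f j → π i < π j := by
  refine ⟨(Tuple.sort f)⁻¹, fun i j hij => lt_of_not_ge fun hji => hij.not_ge ?_⟩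
  simpa using Tuple.monotone_sort f hji

theorem exists_perm_of_shellable {n : ℕ} {r : Fin n → Fin n → Prop}
    (h : Shellable (disjSumCompl '' {S | IsClosedUnder r S})) :
    ∃ π : Equiv.Perm (Fin n), ∀ i j, r i j → π i ≤ π j := by
  classical
  obtain ⟨π, hπ⟩ :=
    exists_perm_lt_of_apply_lt fun k => #{S : Finset (Fin n) | IsClosedUnder r S ∧ k ∈ S}
  refine ⟨π, fun i j hij => ?_⟩
  rcases eq_or_ne i j with rfl | hne
  · rfl
  obtain ⟨S, hS, hsep⟩ := exists_separating_of_shellable h (fun _ h => absurd h (notMem_empty _))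
    (fun _ _ _ _ => mem_univ _) hne
  have hji : j ∈ S ∧ i ∉ S := by
    have := hS i
    tauto
  refine (hπ i j (card_lt_card ((ssubset_iff_of_subset ?_).2 ⟨S, ?_, ?_⟩))).le
  · intro T
    simp only [mem_filter, mem_univ, true_and]
    exact fun ⟨hT, hiT⟩ => ⟨hT, hT i hiT j hij⟩
  · exact mem_filter.2 ⟨mem_univ _, hS, hji.1⟩
  · exact fun hmem => hji.2 (mem_filter.1 hmem).2.2

-- `x i = Sum.inl i`, `y i = Sum.inr i`.
theorem pure_skeleton_shellable_iff_ordering_general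
    {g : ℕ} (G : SimpleGraph (Fin g ⊕ Fin g))
    (hbip : (∀ a b, ¬ G.Adj (Sum.inl a) (Sum.inl b)) ∧
            (∀ a b, ¬ G.Adj (Sum.inr a) (Sum.inr b)))
    (hmatch : ∀ i, G.Adj (Sum.inl i) (Sum.inr i)) :
    PureShellable {F : Finset (Fin g ⊕ Fin g) | GraphIndep G F ∧ F.card = g} ↔
      ∃ π : Equiv.Perm (Fin g), ∀ i j, G.Adj (Sum.inl i) (Sum.inr j) → π i ≤ π j := by
  have hFac := setOf_graphIndep_card_eq_image_disjSumCompl hbip hmatch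
  rw [Fintype.card_fin] at hFac
  rw [hFac]
  constructor
  · exact fun ⟨_, hshell⟩ => exists_perm_of_shellable hshell
  · rintro ⟨π, hπ⟩
    refine ⟨?_, shellable_image_disjSumCompl_of_monotone π.injective hπ⟩
    rintro _ ⟨S, -, rfl⟩ _ ⟨T, -, rfl⟩
    rw [card_disjSumCompl, card_disjSumCompl]

/-- Let `G` be a bipartite graph without isolated vertices on the
bipartition `{x_1,…,x_g} ∪ {y_1,…,y_g}` (here `x i = Sum.inl i`, `y i = Sum.inr i`)
with all edges `{x i, y i}` present. The complex `Γ = Δ_G^{[g]}`, whose facets are the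
independent sets of cardinality `g`, is pure shellable iff the indices can be reordered
by a permutation `π` so that every edge `{x i, y j}` satisfies `π i ≤ π j`. -/
theorem pure_skeleton_shellable_iff_ordering
    {g : ℕ} (G : SimpleGraph (Fin g ⊕ Fin g))
    (hbip : (∀ a b, ¬ G.Adj (Sum.inl a) (Sum.inl b)) ∧
            (∀ a b, ¬ G.Adj (Sum.inr a) (Sum.inr b)))
    (hnoiso : ∀ v, ∃ w, G.Adj v w)
    (hmatch : ∀ i, G.Adj (Sum.inl i) (Sum.inr i)) :
    PureShellable {F : Finset (Fin g ⊕ Fin g) | GraphIndep G F ∧ F.card = g} ↔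
      ∃ π : Equiv.Perm (Fin g), ∀ i j, G.Adj (Sum.inl i) (Sum.inr j) → π i ≤ π j :=
  pure_skeleton_shellable_iff_ordering_general G hbip hmatch
end

section
/- Let G be a bipartite graph without isolated vertices. Then G is unmixed if and only if G has a perfect matching e_1,…,e_g (pairwise disjoint edges whose union is the vertex set) such that for any two distinct edges e, e' of G and any two distinct vertices x ∈ e, y ∈ e' with {x, y} contained in some e_i, the set (e \ {x}) ∪ (e' \ {y}) is an edge of G. -/
variable {V : Type} [Fintype V] [DecidableEq V]

/-- The edges of a simple graph, viewed as a clutter of 2-element finsets. -/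
def graphEdges (G : SimpleGraph V) : Set (Finset V) :=
  {t | ∃ a b : V, G.Adj a b ∧ t = {a, b}}

section MyHelpers

variable {V : Type} [Fintype V] [DecidableEq V]

lemma my_exists_minimal_subcover (E : Set (Finset V)) (C : Finset V)
    (hC : IsVertexCover E C) : ∃ D, D ⊆ C ∧ IsMinimalVertexCover E D := by
  classical
  obtain ⟨D, hDS, hmin⟩ := (C.powerset.filter (fun D => IsVertexCover E D)).exists_min_image
    Finset.card ⟨C, by simp [hC]⟩
  simp only [Finset.mem_filter, Finset.mem_powerset] at hDS
  refine ⟨D, hDS.1, hDS.2, ?_⟩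
  intro D' hD' hD'cov
  have hmem : D' ∈ C.powerset.filter (fun D => IsVertexCover E D) := by
    simp only [Finset.mem_filter, Finset.mem_powerset]
    exact ⟨hD'.subset.trans hDS.1, hD'cov⟩
  have h1 := hmin D' hmem
  have h2 := Finset.card_lt_card hD'
  omega

lemma my_exists_facet_extension (E : Set (Finset V)) (F : Finset V)
    (hF : IsIndependentSet E F) : ∃ S, F ⊆ S ∧ IsFacet E S := by
  classical
  obtain ⟨S, hST, hmax⟩ := (Finset.univ.filter
      (fun T : Finset V => F ⊆ T ∧ IsIndependentSet E T)).exists_max_image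
    Finset.card ⟨F, by simp [hF]⟩
  simp only [Finset.mem_filter, Finset.mem_univ, true_and] at hST
  refine ⟨S, hST.1, hST.2, ?_⟩
  intro G hG hSG
  have hGT : G ∈ Finset.univ.filter (fun T : Finset V => F ⊆ T ∧ IsIndependentSet E T) := by
    simp only [Finset.mem_filter, Finset.mem_univ, true_and]
    exact ⟨hST.1.trans hSG, hG⟩
  exact Finset.eq_of_subset_of_card_le hSG (hmax G hGT)

lemma my_facet_compl_minimal_cover (E : Set (Finset V)) (S : Finset V)
    (hS : IsFacet E S) : IsMinimalVertexCover E Sᶜ := by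
  classical
  constructor
  · intro e he
    by_contra h
    rw [Finset.not_nonempty_iff_eq_empty] at h
    apply hS.1 e he
    intro v hv
    by_contra hvS
    have hmem : v ∈ e ∩ Sᶜ := Finset.mem_inter.2 ⟨hv, Finset.mem_compl.2 hvS⟩
    simp [h] at hmem
  · intro D hD hDcov
    obtain ⟨v, hvC, hvD⟩ := Finset.exists_of_ssubset hD
    have hni : ¬ IsIndependentSet E (insert v S) := by
      intro hind
      have heq := hS.2 _ hind (Finset.subset_insert v S)
      have : v ∈ S := by rw [heq]; exact Finset.mem_insert_self v S
      exact (Finset.mem_compl.1 hvC) this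
    simp only [IsIndependentSet, not_forall, not_not] at hni
    obtain ⟨e, he, hsub⟩ := hni
    obtain ⟨u, hu⟩ := hDcov e he
    rw [Finset.mem_inter] at hu
    have huS : u ∉ S := Finset.mem_compl.1 (hD.subset hu.2)
    have : u = v := by
      rcases Finset.mem_insert.1 (hsub hu.1) with h | h
      · exact h
      · exact absurd h huS
    exact hvD (this ▸ hu.2)

/-- two distinct members of a pair finset determine it -/
lemma my_pair_eq {c d v v' : V} (hv : v ∈ ({c, d} : Finset V)) (hv' : v' ∈ ({c, d} : Finset V))
    (hne : v ≠ v') : ({c, d} : Finset V) = {v, v'} := by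
  simp only [Finset.mem_insert, Finset.mem_singleton] at hv hv'
  rcases hv with rfl | rfl <;> rcases hv' with rfl | rfl
  · exact absurd rfl hne
  · rfl
  · exact Finset.pair_comm _ _
  · exact absurd rfl hne

end MyHelpers

/-- A bipartite graph without isolated vertices is unmixed iff it has a
perfect matching `em` such that for any two distinct edges `e ≠ e'` and distinct
vertices `x ∈ e`, `y ∈ e'` lying in a common matching edge `em i`, the set
`(e \ {x}) ∪ (e' \ {y})` is an edge. -/
theorem bipartite_unmixed_iff_exchange
    (G : SimpleGraph V)
    (hbip : ∃ s : Finset V, ∀ a b, G.Adj a b → ((a ∈ s ∧ b ∉ s) ∨ (a ∉ s ∧ b ∈ s)))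
    (hnoiso : ∀ v : V, ∃ w, G.Adj v w) :
    Unmixed (graphEdges G) ↔
      ∃ (g : ℕ) (em : Fin g → Finset V),
        (∀ i, em i ∈ graphEdges G) ∧
        (∀ i j, i ≠ j → Disjoint (em i) (em j)) ∧
        (∀ x : V, ∃ i, x ∈ em i) ∧
        (∀ e ∈ graphEdges G, ∀ e' ∈ graphEdges G, e ≠ e' →
          ∀ x ∈ e, ∀ y ∈ e', x ≠ y → (∃ i, x ∈ em i ∧ y ∈ em i) →
            e.erase x ∪ e'.erase y ∈ graphEdges G) := by
  classical
  constructor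
  · intro hunm
    obtain ⟨s, hs⟩ := hbip
    have hscov : IsMinimalVertexCover (graphEdges G) s := by
      constructor
      · rintro e ⟨a, b, hab, rfl⟩
        rcases hs a b hab with ⟨ha, _⟩ | ⟨_, hb⟩
        · exact ⟨a, Finset.mem_inter.2 ⟨Finset.mem_insert_self a _, ha⟩⟩
        · exact ⟨b, Finset.mem_inter.2
            ⟨Finset.mem_insert_of_mem (Finset.mem_singleton_self b), hb⟩⟩
      · intro D hD hDcov
        obtain ⟨v, hvs, hvD⟩ := Finset.exists_of_ssubset hD
        obtain ⟨w, hvw⟩ := hnoiso v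
        have hw : w ∉ s := by
          rcases hs v w hvw with ⟨_, h⟩ | ⟨h, _⟩
          · exact h
          · exact absurd hvs h
        obtain ⟨z, hz⟩ := hDcov {v, w} ⟨v, w, hvw, rfl⟩
        rw [Finset.mem_inter] at hz
        rcases Finset.mem_insert.1 hz.1 with rfl | h
        · exact hvD hz.2
        · rw [Finset.mem_singleton] at h
          subst h
          exact hw (hD.subset hz.2)
    have hccov : IsMinimalVertexCover (graphEdges G) sᶜ := by
      constructor
      · rintro e ⟨a, b, hab, rfl⟩
        rcases hs a b hab with ⟨_, hb⟩ | ⟨ha, _⟩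
        · exact ⟨b, Finset.mem_inter.2
            ⟨Finset.mem_insert_of_mem (Finset.mem_singleton_self b), Finset.mem_compl.2 hb⟩⟩
        · exact ⟨a, Finset.mem_inter.2 ⟨Finset.mem_insert_self a _, Finset.mem_compl.2 ha⟩⟩
      · intro D hD hDcov
        obtain ⟨v, hvs, hvD⟩ := Finset.exists_of_ssubset hD
        have hvns : v ∉ s := Finset.mem_compl.1 hvs
        obtain ⟨w, hvw⟩ := hnoiso v
        have hw : w ∈ s := by
          rcases hs v w hvw with ⟨h, _⟩ | ⟨_, h⟩
          · exact absurd h hvns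
          · exact h
        obtain ⟨z, hz⟩ := hDcov {v, w} ⟨v, w, hvw, rfl⟩
        rw [Finset.mem_inter] at hz
        rcases Finset.mem_insert.1 hz.1 with rfl | h
        · exact hvD hz.2
        · rw [Finset.mem_singleton] at h
          subst h
          exact (Finset.mem_compl.1 (hD.subset hz.2)) hw
    have hcards : sᶜ.card = s.card := hunm _ _ hccov hscov
    -- Hall's condition
    set t : {x // x ∈ s} → Finset V := fun x => Finset.univ.filter (fun w => G.Adj ↑x w) with ht
    have hhall : ∀ A : Finset {x // x ∈ s}, A.card ≤ (A.biUnion t).card := by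
      intro A
      by_contra hlt
      push_neg at hlt
      set B := A.biUnion t with hB
      set A' := A.image (fun x : {x // x ∈ s} => (x : V)) with hA'
      have hA'card : A'.card = A.card := Finset.card_image_of_injective _ Subtype.coe_injective
      have hA's : A' ⊆ s := by
        intro v hv
        obtain ⟨x, _, rfl⟩ := Finset.mem_image.1 hv
        exact x.2
      have hcover : IsVertexCover (graphEdges G) ((s \ A') ∪ B) := by
        have main : ∀ a b : V, G.Adj a b → a ∈ s →
            (({a, b} : Finset V) ∩ ((s \ A') ∪ B)).Nonempty := by
          intro a b hab ha
          by_cases hc : a ∈ A'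
          · obtain ⟨x, hxA, hxa⟩ := Finset.mem_image.1 hc
            have hbB : b ∈ B := Finset.mem_biUnion.2 ⟨x, hxA, by
              simp only [t, Finset.mem_filter, Finset.mem_univ, true_and]
              rw [hxa]; exact hab⟩
            exact ⟨b, Finset.mem_inter.2 ⟨Finset.mem_insert_of_mem (Finset.mem_singleton_self b),
              Finset.mem_union_right _ hbB⟩⟩
          · exact ⟨a, Finset.mem_inter.2 ⟨Finset.mem_insert_self a _,
              Finset.mem_union_left _ (Finset.mem_sdiff.2 ⟨ha, hc⟩)⟩⟩
        rintro e ⟨a, b, hab, rfl⟩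
        rcases hs a b hab with ⟨ha, _⟩ | ⟨_, hb⟩
        · exact main a b hab ha
        · rw [Finset.pair_comm]
          exact main b a hab.symm hb
      obtain ⟨D, hDsub, hDmin⟩ := my_exists_minimal_subcover _ _ hcover
      have hDcard : D.card = s.card := hunm _ _ hDmin hscov
      have h1 : D.card ≤ (s \ A').card + B.card :=
        le_trans (Finset.card_le_card hDsub) (Finset.card_union_le _ _)
      have h2 : (s \ A').card = s.card - A'.card := Finset.card_sdiff_of_subset hA's
      have h3 : A'.card ≤ s.card := Finset.card_le_card hA's
      omega
    obtain ⟨f, hfinj, hf⟩ := (Finset.all_card_le_biUnion_card_iff_exists_injective t).1 hhall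
    have hadj : ∀ x : {x // x ∈ s}, G.Adj ↑x (f x) := by
      intro x
      have := hf x
      simpa only [t, Finset.mem_filter, Finset.mem_univ, true_and] using this
    have hfns : ∀ x : {x // x ∈ s}, f x ∉ s := by
      intro x
      rcases hs ↑x (f x) (hadj x) with ⟨_, h⟩ | ⟨h, _⟩
      · exact h
      · exact absurd x.2 h
    set eqv : Fin s.card ≃ {x // x ∈ s} := s.equivFin.symm with heqv
    set em : Fin s.card → Finset V := fun i => {↑(eqv i), f (eqv i)} with hem
    have hmemem : ∀ i, em i ∈ graphEdges G := fun i => ⟨↑(eqv i), f (eqv i), hadj (eqv i), rfl⟩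
    have hdisjem : ∀ i j, i ≠ j → Disjoint (em i) (em j) := by
      intro i j hij
      rw [Finset.disjoint_left]
      intro a hai haj
      simp only [hem, Finset.mem_insert, Finset.mem_singleton] at hai haj
      rcases hai with rfl | rfl <;> rcases haj with h | h
      · exact hij (eqv.injective (Subtype.coe_injective h))
      · exact hfns (eqv j) (h ▸ (eqv i).2)
      · exact hfns (eqv i) (h.symm ▸ (eqv j).2)
      · exact hij (eqv.injective (hfinj h))
    have himg : Finset.univ.image f = sᶜ := by
      apply Finset.eq_of_subset_of_card_le
      · intro v hv
        obtain ⟨x, _, rfl⟩ := Finset.mem_image.1 hv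
        exact Finset.mem_compl.2 (hfns x)
      · rw [Finset.card_image_of_injective _ hfinj, Finset.card_univ, Fintype.card_coe]
        exact hcards.le
    have hcovall : ∀ x : V, ∃ i, x ∈ em i := by
      intro x
      by_cases hx : x ∈ s
      · refine ⟨s.equivFin ⟨x, hx⟩, ?_⟩
        simp only [hem, heqv, Equiv.symm_apply_apply]
        exact Finset.mem_insert_self x _
      · have hxc : x ∈ Finset.univ.image f := himg ▸ Finset.mem_compl.2 hx
        obtain ⟨y, _, hyx⟩ := Finset.mem_image.1 hxc
        refine ⟨s.equivFin y, ?_⟩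
        simp only [hem, heqv, Equiv.symm_apply_apply, hyx]
        exact Finset.mem_insert_of_mem (Finset.mem_singleton_self x)
    choose ℓ hℓ using hcovall
    have hindep_of : ∀ S : Finset V, IsIndependentSet (graphEdges G) S →
        ∀ a b : V, G.Adj a b → a ∈ S → b ∈ S → False := by
      intro S hS a b hab haS hbS
      exact hS {a, b} ⟨a, b, hab, rfl⟩
        (Finset.insert_subset haS (Finset.singleton_subset_iff.2 hbS))
    have core : ∀ (i : Fin s.card) (e e' : Finset V), e ∈ graphEdges G → e' ∈ graphEdges G →
        e ≠ e' → ↑(eqv i) ∈ e → f (eqv i) ∈ e' →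
        e.erase ↑(eqv i) ∪ e'.erase (f (eqv i)) ∈ graphEdges G := by
      intro i e e' he he' hee hue hwe
      set u : V := ↑(eqv i) with hudef
      set w : V := f (eqv i) with hwdef
      have huw : G.Adj u w := hadj (eqv i)
      have hus : u ∈ s := (eqv i).2
      have hws : w ∉ s := hfns (eqv i)
      obtain ⟨a, hua, hea⟩ : ∃ a, G.Adj u a ∧ e = {u, a} := by
        obtain ⟨c, d, hcd, rfl⟩ := he
        rcases Finset.mem_insert.1 hue with rfl | h
        · exact ⟨d, hcd, rfl⟩
        · rw [Finset.mem_singleton] at h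
          subst h
          exact ⟨c, hcd.symm, Finset.pair_comm c u⟩
      obtain ⟨b, hwb, heb⟩ : ∃ b, G.Adj w b ∧ e' = {w, b} := by
        obtain ⟨c, d, hcd, rfl⟩ := he'
        rcases Finset.mem_insert.1 hwe with rfl | h
        · exact ⟨d, hcd, rfl⟩
        · rw [Finset.mem_singleton] at h
          subst h
          exact ⟨c, hcd.symm, Finset.pair_comm c w⟩
      have hna : a ∉ s := by
        rcases hs u a hua with ⟨_, h⟩ | ⟨h, _⟩
        · exact h
        · exact absurd hus h
      have hnb : b ∈ s := by
        rcases hs w b hwb with ⟨h, _⟩ | ⟨_, h⟩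
        · exact absurd h hws
        · exact h
      have herase1 : e.erase u = {a} := by
        rw [hea]
        exact Finset.erase_insert (by simp [hua.ne])
      have herase2 : e'.erase w = {b} := by
        rw [heb]
        exact Finset.erase_insert (by simp [hwb.ne])
      rw [herase1, herase2]
      have hsu : ({a} ∪ {b} : Finset V) = {a, b} := by
        ext z; simp
      rw [hsu]
      by_cases haw : a = w
      · subst haw
        exact ⟨w, b, hwb, rfl⟩
      by_cases hbu : b = u
      · subst hbu
        exact ⟨u, a, hua, Finset.pair_comm a u⟩
      have hba : G.Adj a b := by
        by_contra hnadj
        have hnadj2 : ¬ G.Adj b a := fun h => hnadj h.symm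
        have hTind : IsIndependentSet (graphEdges G) {b, a} := by
          rintro e'' ⟨c, d, hcd, rfl⟩ hsub
          have hc := hsub (Finset.mem_insert_self c _)
          have hd := hsub (Finset.mem_insert_of_mem (Finset.mem_singleton_self d))
          simp only [Finset.mem_insert, Finset.mem_singleton] at hc hd
          rcases hc with rfl | rfl <;> rcases hd with rfl | rfl
          · exact hcd.ne rfl
          · exact hnadj2 hcd
          · exact hnadj hcd
          · exact hcd.ne rfl
        obtain ⟨S, hTS, hfac⟩ := my_exists_facet_extension _ _ hTind
        have hSc := my_facet_compl_minimal_cover _ _ hfac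
        have hSccard : Sᶜ.card = s.card := hunm _ _ hSc hscov
        have hVcard := Finset.card_add_card_compl s
        have hVcard2 := Finset.card_add_card_compl S
        have haS : a ∈ S := hTS (Finset.mem_insert_of_mem (Finset.mem_singleton_self a))
        have hbS : b ∈ S := hTS (Finset.mem_insert_self b _)
        have huS : u ∉ S := fun h => hindep_of S hfac.1 u a hua h haS
        have hwS : w ∉ S := fun h => hindep_of S hfac.1 w b hwb h hbS
        have hmap : ∀ v ∈ S, ℓ v ∈ Finset.univ.erase i := by
          intro v hv
          rw [Finset.mem_erase]
          refine ⟨?_, Finset.mem_univ _⟩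
          intro hli
          have hvem : v ∈ em i := hli ▸ hℓ v
          simp only [hem, Finset.mem_insert, Finset.mem_singleton, ← hudef, ← hwdef] at hvem
          rcases hvem with rfl | rfl
          · exact huS hv
          · exact hwS hv
        have hinjS : Set.InjOn ℓ S := by
          intro v hv v' hv' hll
          by_contra hvv
          obtain ⟨c, d, hcd, hcd'⟩ := hmemem (ℓ v)
          have h1 : v ∈ em (ℓ v) := hℓ v
          have h2 : v' ∈ em (ℓ v) := hll ▸ hℓ v'
          have hpair : em (ℓ v) = {v, v'} := by
            rw [hcd'] at h1 h2 ⊢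
            exact my_pair_eq h1 h2 hvv
          exact hfac.1 (em (ℓ v)) (hmemem (ℓ v)) (by
            rw [hpair]
            exact Finset.insert_subset hv (Finset.singleton_subset_iff.2 hv'))
        have hle : S.card ≤ (Finset.univ.erase i).card :=
          Finset.card_le_card_of_injOn ℓ hmap hinjS
        have herasecard : (Finset.univ.erase i).card = s.card - 1 := by
          rw [Finset.card_erase_of_mem (Finset.mem_univ i), Finset.card_univ, Fintype.card_fin]
        have hpos : 0 < s.card := i.pos
        omega
      exact ⟨a, b, hba, rfl⟩
    refine ⟨s.card, em, hmemem, hdisjem, fun x => ⟨ℓ x, hℓ x⟩, ?_⟩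
    intro e he e' he' hee x hx y hy hxy hi
    obtain ⟨i, hxi, hyi⟩ := hi
    simp only [hem, Finset.mem_insert, Finset.mem_singleton] at hxi hyi
    rcases hxi with rfl | rfl <;> rcases hyi with rfl | rfl
    · exact absurd rfl hxy
    · exact core i e e' he he' hee hx hy
    · rw [Finset.union_comm]
      exact core i e' e he' he (Ne.symm hee) hy hx
    · exact absurd rfl hxy
  · rintro ⟨g, em, hmem, hdisj, hcov, hexch⟩
    have key : ∀ C : Finset V, IsMinimalVertexCover (graphEdges G) C → C.card = g := by
      intro C hC
      -- each vertex of C gives an edge meeting C only in it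
      have hw : ∀ w ∈ C, ∃ e ∈ graphEdges G, w ∈ e ∧ ∀ z ∈ e, z ∈ C → z = w := by
        intro w hwC
        have hsub : C.erase w ⊂ C := Finset.erase_ssubset hwC
        have hnc := hC.2 _ hsub
        simp only [IsVertexCover, not_forall] at hnc
        obtain ⟨e, he, hne⟩ := hnc
        rw [Finset.not_nonempty_iff_eq_empty] at hne
        have haux : ∀ z ∈ e, z ∈ C → z = w := by
          intro z hz hzC
          by_contra hzw
          have : z ∈ e ∩ C.erase w := Finset.mem_inter.2 ⟨hz, Finset.mem_erase.2 ⟨hzw, hzC⟩⟩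
          simp [hne] at this
        obtain ⟨z, hz⟩ := hC.1 e he
        rw [Finset.mem_inter] at hz
        have := haux z hz.1 hz.2
        exact ⟨e, he, this ▸ hz.1, haux⟩
      -- (C ∩ em i).card = 1 for each i
      have hone : ∀ i : Fin g, (C ∩ em i).card = 1 := by
        intro i
        obtain ⟨a, b, hab, hemi⟩ := hmem i
        have hnab : a ≠ b := hab.ne
        rw [Finset.card_eq_one]
        obtain ⟨u, hu⟩ := hC.1 (em i) (hmem i)
        rw [Finset.mem_inter] at hu
        refine ⟨u, Finset.eq_singleton_iff_unique_mem.2 ⟨Finset.mem_inter.2 ⟨hu.2, hu.1⟩, ?_⟩⟩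
        intro v hv
        rw [Finset.mem_inter] at hv
        by_contra hvu
        -- both u, v ∈ em i ∩ C, distinct: em i = {v, u}
        have hpair : em i = {v, u} := by
          rw [hemi]; exact my_pair_eq (hemi ▸ hv.2) (hemi ▸ hu.1) hvu
        obtain ⟨e, he, hve, hvonly⟩ := hw v hv.1
        obtain ⟨e', he', hue', huonly⟩ := hw u hu.2
        have hee' : e ≠ e' := by
          rintro rfl
          exact hvu (huonly v hve hv.1)
        have hres := hexch e he e' he' hee' v hve u hue' hvu
          ⟨i, by rw [hpair]; exact Finset.mem_insert_self _ _,
              by rw [hpair]; exact Finset.mem_insert_of_mem (Finset.mem_singleton_self _)⟩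
        obtain ⟨z, hz⟩ := hC.1 _ hres
        rw [Finset.mem_inter, Finset.mem_union] at hz
        rcases hz.1 with h | h
        · rw [Finset.mem_erase] at h
          exact h.1 (hvonly z h.2 hz.2)
        · rw [Finset.mem_erase] at h
          exact h.1 (huonly z h.2 hz.2)
      -- sum up
      have hCeq : C = Finset.univ.biUnion (fun i : Fin g => C ∩ em i) := by
        apply Finset.ext
        intro v
        simp only [Finset.mem_biUnion, Finset.mem_univ, true_and, Finset.mem_inter]
        constructor
        · intro hv
          obtain ⟨i, hi⟩ := hcov v
          exact ⟨i, hv, hi⟩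
        · rintro ⟨i, hv, _⟩; exact hv
      rw [hCeq, Finset.card_biUnion, Finset.sum_congr rfl (fun i _ => hone i)]
      · simp
      · intro i _ j _ hij
        exact Disjoint.mono (Finset.inter_subset_right)
          (Finset.inter_subset_right) (hdisj i j hij)
    intro C D hC hD
    rw [key C hC, key D hD]
end
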